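/- Let b = (2 ln 2)^{1/2} and G(ω) = χ(ω ∈ (−∞, −b) ∪ (0, b)). Then the Hermite coefficients satisfy C₁ = φ(0) − 2φ(b) = 0, C₂ = 0, and C₃ = −b²·φ(0) ≠ 0, where C_j = ∫ G(ω)H_j(ω)φ(ω)dω; hence G − E G has Hermite rank 3. -/

import Mathlib

/-! Mathlib's `Polynomial.hermite` are the probabilists' Hermite polynomials, and
`(Hₙ φ)' = -Hₙ₊₁ φ`. Hence the integral of `Hₙ₊₁ φ` over `(-∞, -b) ∪ (0, b)` only sees boundary
terms, `Hₙ(0) φ(0) - (Hₙ(-b) + Hₙ(b)) φ(b)`. Since `φ(b) = φ(0) / 2`, this is `φ(0) - 2 φ(b) = 0`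
for `n = 0`, vanishes for `n = 1` because `H₁` is odd, and for `n = 2` equals
`-φ(0) - 2 (b² - 1) φ(0) / 2 = -b² φ(0)`. -/

open MeasureTheory

noncomputable def gaussPDF (x : ℝ) : ℝ :=
  (Real.sqrt (2 * Real.pi))⁻¹ * Real.exp (-x ^ 2 / 2)

open Filter Polynomial Set Topology

lemma gaussPDF_neg (x : ℝ) : gaussPDF (-x) = gaussPDF x := by
  simp [gaussPDF]

lemma gaussPDF_pos (x : ℝ) : 0 < gaussPDF x := by
  unfold gaussPDF
  have : 0 < Real.sqrt (2 * Real.pi) := Real.sqrt_pos.mpr (by positivity)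
  positivity

lemma gaussPDF_eq_half_gaussPDF_zero {b : ℝ} (hb : b ^ 2 = 2 * Real.log 2) :
    gaussPDF b = gaussPDF 0 / 2 := by
  simp only [gaussPDF, hb]
  rw [show -(2 * Real.log 2) / 2 = -Real.log 2 by ring, Real.exp_neg, Real.exp_log two_pos]
  simp [div_eq_mul_inv]

lemma hasDerivAt_gaussPDF (x : ℝ) : HasDerivAt gaussPDF (-x * gaussPDF x) x := by
  refine ((((hasDerivAt_pow 2 x).neg.div_const 2).exp).const_mul
    (Real.sqrt (2 * Real.pi))⁻¹).congr_deriv ?_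
  simp only [gaussPDF, Pi.neg_apply]
  push_cast
  ring

lemma integrable_pow_mul_gaussPDF (n : ℕ) : Integrable fun x : ℝ => x ^ n * gaussPDF x := by
  have h := (integrable_rpow_mul_exp_neg_mul_sq (b := 1 / 2) (by norm_num)
    (s := n) (by linarith [n.cast_nonneg (α := ℝ)])).const_mul (Real.sqrt (2 * Real.pi))⁻¹
  refine h.congr (Eventually.of_forall fun x => ?_)
  simp only [gaussPDF, Real.rpow_natCast]
  ring_nf

lemma integrable_aeval_mul_gaussPDF {R : Type*} [CommSemiring R] [Algebra R ℝ] (p : R[X]) :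
    Integrable fun x : ℝ => aeval x p * gaussPDF x := by
  induction p using Polynomial.induction_on' with
  | add p q hp hq =>
    simp only [map_add, add_mul]
    exact hp.add hq
  | monomial n a =>
    simpa only [aeval_monomial, mul_assoc] using
      (integrable_pow_mul_gaussPDF n).const_mul (algebraMap R ℝ a)

lemma hasDerivAt_aeval_hermite_mul_gaussPDF (n : ℕ) (x : ℝ) :
    HasDerivAt (fun x => aeval x (hermite n) * gaussPDF x)
      (-(aeval x (hermite (n + 1)) * gaussPDF x)) x := by
  refine (((hermite n).hasDerivAt_aeval x).mul (hasDerivAt_gaussPDF x)).congr_deriv ?_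
  rw [hermite_succ, map_sub, map_mul, aeval_X]
  ring

lemma tendsto_aeval_hermite_mul_gaussPDF_atBot (n : ℕ) :
    Tendsto (fun x => aeval x (hermite n) * gaussPDF x) atBot (𝓝 0) :=
  tendsto_zero_of_hasDerivAt_of_integrableOn_Iic (a := 0)
    (fun x _ => hasDerivAt_aeval_hermite_mul_gaussPDF n x)
    (integrable_aeval_mul_gaussPDF _).neg.integrableOn (integrable_aeval_mul_gaussPDF _).integrableOn

lemma integral_Iio_union_Ioo_of_hasDerivAt {F f : ℝ → ℝ} {a c d : ℝ} (hac : a ≤ c) (hcd : c ≤ d)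
    (hderiv : ∀ x, HasDerivAt F (f x) x) (hf : Integrable f) (hbot : Tendsto F atBot (𝓝 0)) :
    ∫ x in Iio a ∪ Ioo c d, f x = F a + (F d - F c) := by
  have hdisj : Disjoint (Iio a) (Ioo c d) :=
    disjoint_left.2 fun x hxa hxc => (hxa.out.trans_le hac).not_gt hxc.1
  rw [setIntegral_union hdisj measurableSet_Ioo hf.integrableOn hf.integrableOn,
    ← integral_Iic_eq_integral_Iio, integral_Iic_of_hasDerivAt_of_tendsto' (fun x _ => hderiv x)
      hf.integrableOn hbot, ← integral_Ioc_eq_integral_Ioo, ← intervalIntegral.integral_of_le hcd,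
    intervalIntegral.integral_eq_sub_of_hasDerivAt (fun x _ => hderiv x) hf.intervalIntegrable,
    sub_zero]

lemma setIntegral_Iio_union_Ioo_aeval_hermite_mul_gaussPDF (n : ℕ) {a c d : ℝ} (hac : a ≤ c)
    (hcd : c ≤ d) :
    ∫ x in Iio a ∪ Ioo c d, aeval x (hermite (n + 1)) * gaussPDF x =
      aeval c (hermite n) * gaussPDF c - aeval a (hermite n) * gaussPDF a -
        aeval d (hermite n) * gaussPDF d := by
  have hderiv : ∀ x, HasDerivAt (fun x => -(aeval x (hermite n) * gaussPDF x))
      (aeval x (hermite (n + 1)) * gaussPDF x) x := fun x =>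
    (hasDerivAt_aeval_hermite_mul_gaussPDF n x).neg.congr_deriv (neg_neg _)
  rw [integral_Iio_union_Ioo_of_hasDerivAt hac hcd hderiv (integrable_aeval_mul_gaussPDF _)
    (by simpa using (tendsto_aeval_hermite_mul_gaussPDF_atBot n).neg)]
  ring

lemma integral_ite_mul_hermite_mul_gaussPDF {b : ℝ} (hb : 0 ≤ b) {G H : ℝ → ℝ} (n : ℕ)
    (hG : ∀ w, G w = if w < -b ∨ (0 < w ∧ w < b) then 1 else 0)
    (hH : ∀ w, aeval w (hermite (n + 1)) = H w) :
    ∫ w, G w * H w * gaussPDF w = aeval 0 (hermite n) * gaussPDF 0 -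
      (aeval (-b) (hermite n) + aeval b (hermite n)) * gaussPDF b := by
  have hGS : (fun w => G w * H w * gaussPDF w) =
      (Iio (-b) ∪ Ioo 0 b).indicator fun w => aeval w (hermite (n + 1)) * gaussPDF w := by
    ext w
    rw [hG, ← hH]
    by_cases hw : w < -b ∨ (0 < w ∧ w < b) <;> simp [hw]
  rw [hGS, integral_indicator (measurableSet_Iio.union measurableSet_Ioo),
    setIntegral_Iio_union_Ioo_aeval_hermite_mul_gaussPDF n (by linarith) hb, gaussPDF_neg]
  ring

namespace Polynomial

lemma hermite_two : hermite 2 = X ^ 2 - 1 := by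
  rw [hermite_succ, hermite_one, derivative_X]
  ring

lemma hermite_three : hermite 3 = X ^ 3 - 3 * X := by
  rw [hermite_succ, hermite_two, derivative_sub, derivative_X_sq, derivative_one]
  simp only [map_ofNat]
  ring

end Polynomial

theorem hermite_rank_three_example (b : ℝ) (hb : b = Real.sqrt (2 * Real.log 2))
    (G : ℝ → ℝ) (hG : ∀ w, G w = if w < -b ∨ (0 < w ∧ w < b) then 1 else 0) :
    (∫ w, G w * w * gaussPDF w) = gaussPDF 0 - 2 * gaussPDF b ∧
    gaussPDF 0 - 2 * gaussPDF b = 0 ∧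
    (∫ w, G w * (w ^ 2 - 1) * gaussPDF w) = 0 ∧
    (∫ w, G w * (w ^ 3 - 3 * w) * gaussPDF w) = -b ^ 2 * gaussPDF 0 ∧
    -b ^ 2 * gaussPDF 0 ≠ 0 := by
  have hb0 : 0 ≤ b := hb ▸ Real.sqrt_nonneg _
  have hb2 : b ^ 2 = 2 * Real.log 2 := hb ▸ Real.sq_sqrt (by positivity)
  have hφb : gaussPDF b = gaussPDF 0 / 2 := gaussPDF_eq_half_gaussPDF_zero hb2
  have hC := fun n (H : ℝ → ℝ) => integral_ite_mul_hermite_mul_gaussPDF (H := H) hb0 n hG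
  refine ⟨?_, ?_, ?_, ?_, ?_⟩
  · rw [hC 0 _ fun w => by rw [hermite_one, aeval_X]]
    simp only [hermite_zero, map_one]
    ring
  · rw [hφb]; ring
  · rw [hC 1 _ fun w => by rw [hermite_two]; simp]
    simp only [hermite_one, aeval_X]
    ring
  · rw [hC 2 _ fun w => by rw [hermite_three]; simp [map_ofNat]]
    simp only [hermite_two, map_sub, map_pow, aeval_X, map_one, hφb]
    ring
  · exact mul_ne_zero (neg_ne_zero.2 (by rw [hb2]; positivity)) (gaussPDF_pos 0).ne'
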